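/- Let μ > 0 and λ be real numbers with λ + μ > 0 and 3λ + 2μ > 0, set κ = λ + 2μ/3 and E_Y = μ(3λ + 2μ)/(λ + μ). Let σ_ts > 0, σ_hs > 0 with 3σ_hs − σ_ts > 0, let δ, G_c, ε > 0, and define W_ts = σ_ts²/(2E_Y), W_hs = σ_hs²/(2κ), α₁ = (1/σ_hs)·δ·G_c/(8ε) − 2W_hs/(3σ_hs), and α₂ = (√3(3σ_hs − σ_ts)/(σ_hs·σ_ts))·δ·G_c/(8ε) + 2W_hs/(√3·σ_hs) − 2√3·W_ts/σ_ts. Then for every real 3×3 symmetric matrix E, with S = 2μ·E + λ·(tr E)·I, the undamaged driving force ĉ_e(E) = μ·α₂·√(2·tr(E_D²)) + 3κ·α₁·tr E satisfies the exact identity ĉ_e(E) = (3δ·G_c/(8ε))·((3σ_hs − σ_ts)/(√3·σ_hs·σ_ts))·(F(S) + √3·σ_hs·σ_ts/(3σ_hs − σ_ts)) + (2W_hs/(√3·σ_hs) − 2√3·W_ts/σ_ts)·√(J₂(S)) − (2W_hs/(3σ_hs))·I₁(S), where F is the Drucker–Prager strength function. (This makes precise the paper's claim that ĉ_e(E) equals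 the F-term up to corrections of order ε⁰.) -/
import Mathlib
set_option maxHeartbeats 1000000


open Matrix

/-- Deviatoric part of a 3×3 real matrix. -/
noncomputable def dev (A : Matrix (Fin 3) (Fin 3) ℝ) : Matrix (Fin 3) (Fin 3) ℝ :=
  A - (A.trace / 3) • (1 : Matrix (Fin 3) (Fin 3) ℝ)

/-- Second principal invariant of the deviatoric part: J₂ = (1/2)·tr(σ_D²). -/
noncomputable def J2 (A : Matrix (Fin 3) (Fin 3) ℝ) : ℝ :=
  (1 / 2) * (dev A * dev A).trace

/-- Drucker–Prager strength function. -/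
noncomputable def druckerPrager (sts shs : ℝ) (A : Matrix (Fin 3) (Fin 3) ℝ) : ℝ :=
  Real.sqrt (J2 A) + sts / (Real.sqrt 3 * (3 * shs - sts)) * A.trace
    - Real.sqrt 3 * shs * sts / (3 * shs - sts)

theorem undamagedDrivingForce_strength_identity
    (μ lam : ℝ) (hμ : 0 < μ) (hlm : 0 < lam + μ) (h32 : 0 < 3 * lam + 2 * μ)
    (κ EY : ℝ) (hκ : κ = lam + 2 * μ / 3) (hEY : EY = μ * (3 * lam + 2 * μ) / (lam + μ))
    (sts shs : ℝ) (hsts : 0 < sts) (hshs : 0 < shs) (hdp : 0 < 3 * shs - sts)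
    (δ Gc ε : ℝ) (hδ : 0 < δ) (hGc : 0 < Gc) (hε : 0 < ε)
    (Wts Whs α₁ α₂ : ℝ)
    (hWts : Wts = sts ^ 2 / (2 * EY)) (hWhs : Whs = shs ^ 2 / (2 * κ))
    (hα₁ : α₁ = (1 / shs) * (δ * Gc / (8 * ε)) - 2 * Whs / (3 * shs))
    (hα₂ : α₂ = Real.sqrt 3 * (3 * shs - sts) / (shs * sts) * (δ * Gc / (8 * ε))
        + 2 * Whs / (Real.sqrt 3 * shs) - 2 * Real.sqrt 3 * Wts / sts)
    (E : Matrix (Fin 3) (Fin 3) ℝ) (hE : E.IsSymm)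
    (S : Matrix (Fin 3) (Fin 3) ℝ)
    (hS : S = (2 * μ) • E + (lam * E.trace) • (1 : Matrix (Fin 3) (Fin 3) ℝ))
    (che : ℝ)
    (hche : che = μ * α₂ * Real.sqrt (2 * (dev E * dev E).trace) + 3 * κ * α₁ * E.trace) :
    che = (3 * δ * Gc / (8 * ε)) * ((3 * shs - sts) / (Real.sqrt 3 * shs * sts)) *
            (druckerPrager sts shs S + Real.sqrt 3 * shs * sts / (3 * shs - sts))
          + (2 * Whs / (Real.sqrt 3 * shs) - 2 * Real.sqrt 3 * Wts / sts) * Real.sqrt (J2 S)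
          - (2 * Whs / (3 * shs)) * S.trace := by

  have t3 : Real.sqrt 3 ≠ 0 := by positivity
  have h3 : Real.sqrt 3 * Real.sqrt 3 = 3 := Real.mul_self_sqrt (by norm_num)
  have hdev : dev S = (2 * μ) • dev E := by
    simp only [dev, hS, Matrix.trace_add, Matrix.trace_smul, Matrix.trace_one,
      Fintype.card_fin, smul_eq_mul]
    module
  have htr : S.trace = (3 * lam + 2 * μ) * E.trace := by
    simp [hS, Matrix.trace_add, Matrix.trace_smul, Matrix.trace_one, Fintype.card_fin, smul_eq_mul]
    ring
  have hJ2 : J2 S = (2 * μ) ^ 2 * J2 E := by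
    simp only [J2, hdev, Matrix.smul_mul, Matrix.mul_smul, Matrix.trace_smul,
      smul_eq_mul]
    ring
  have hsq : Real.sqrt (J2 S) = (2 * μ) * Real.sqrt (J2 E) := by
    rw [hJ2, Real.sqrt_mul (sq_nonneg _), Real.sqrt_sq (by positivity)]
  have hsq2 : Real.sqrt (2 * (dev E * dev E).trace) = 2 * Real.sqrt (J2 E) := by
    have h4 : 2 * (dev E * dev E).trace = 2 ^ 2 * J2 E := by simp [J2]; ring
    rw [h4, Real.sqrt_mul (by norm_num), Real.sqrt_sq (by norm_num)]
  have hκ3 : 3 * κ = 3 * lam + 2 * μ := by rw [hκ]; ring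
  rw [hche, druckerPrager, hsq, hsq2, htr, hα₁, hα₂, hκ3]
  have hA : (3 * δ * Gc / (8 * ε)) * ((3 * shs - sts) / (Real.sqrt 3 * shs * sts)) *
      (sts / (Real.sqrt 3 * (3 * shs - sts))) = δ * Gc / (8 * ε) * (1 / shs) := by
    rw [div_mul_div_comm, div_mul_div_comm, div_mul_div_comm,
      div_eq_div_iff (by positivity) (by positivity)]
    linear_combination (-(8 * ε * δ * Gc * shs * sts * (3 * shs - sts))) * h3
  have hB : (3 * δ * Gc / (8 * ε)) * ((3 * shs - sts) / (Real.sqrt 3 * shs * sts))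
      = Real.sqrt 3 * (3 * shs - sts) / (shs * sts) * (δ * Gc / (8 * ε)) := by
    rw [div_mul_div_comm, div_mul_div_comm, div_eq_div_iff (by positivity) (by positivity)]
    linear_combination (-(8 * ε * δ * Gc * shs * sts * (3 * shs - sts))) * h3
  linear_combination (-(2 * μ * Real.sqrt (J2 E))) * hB - ((3 * lam + 2 * μ) * E.trace) * hA
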